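/- Let q be a prime power, let 0 < k', k ≤ n, let U₀ = rs[ I_{k'} | 0_{k'×(n−k')} ], let t satisfy |k−k'| ≤ t, and set ω = min(0, k − k') + t. Then a k-dimensional subspace 𝒱 of F_q^n lies in the ball B_{I,t}^k(U₀) (i.e., d_I(U₀, 𝒱) ≤ t) if and only if 𝒱 = rs[ V₁ | V₂ ] for some V₁ ∈ F_q^{k×k'} and some V₂ ∈ F_q^{k×(n−k')} of the form V₂ = X·Y with X ∈ F_q^{k×ω} and Y ∈ F_q^{ω×(n−k')} (equivalently, with rank(V₂) ≤ ω), where [ V₁ | V₂ ] has rank k. -/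

import Mathlib

/-- The standard subspace `U₀ = rs [I_{k'} | 0]`, spanned by the first `k'`
standard basis vectors of `F^n`. -/
def stdSubspace (F : Type*) [Field F] (n k' : ℕ) (h : k' ≤ n) :
    Submodule F (Fin n → F) :=
  Submodule.span F
    (Set.range fun i : Fin k' => (Pi.single (Fin.castLE h i) (1 : F) : Fin n → F))

/-!
Let `π : F^n → F^(n-k')` forget the first `k'` coordinates, so that `U₀ = ker π`. If `𝒱` is the
row space of `W = [V₁ | V₂]`, then `π 𝒱` is the row space of `V₂`, and rank–nullity for `π`
restricted to `𝒱` gives `dim (U₀ ∩ 𝒱) + rank V₂ = dim 𝒱 = k`. Hence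
`d_I(U₀, 𝒱) = max k' k - k + rank V₂`, which is at most `t` exactly when `rank V₂ ≤ ω`, i.e. when
`V₂` factors through `F^ω`.
-/

open Module

theorem Submodule.finrank_inf_ker_add_finrank_map {K V W : Type*} [DivisionRing K]
    [AddCommGroup V] [Module K V] [AddCommGroup W] [Module K W]
    (P : Submodule K V) [FiniteDimensional K P] (f : V →ₗ[K] W) :
    finrank K ↥(P ⊓ LinearMap.ker f) + finrank K ↥(P.map f) = finrank K P := by
  rw [← map_comap_subtype, finrank_map_subtype_eq, ← LinearMap.ker_domRestrict,
    ← LinearMap.range_domRestrict, add_comm, LinearMap.finrank_range_add_finrank_ker]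

namespace Matrix

theorem rank_le_iff_exists_mul_eq {K m n : Type*} [Field K] [Fintype m] [DecidableEq m]
    [Fintype n] [DecidableEq n] (M : Matrix m n K) (r : ℕ) :
    M.rank ≤ r ↔ ∃ (X : Matrix m (Fin r) K) (Y : Matrix (Fin r) n K), X * Y = M := by
  refine ⟨fun h => ?_, fun ⟨X, Y, hXY⟩ => ?_⟩
  · -- `K^r` surjects onto the column space `R` of `M`, and `M` lifts through that surjection.
    set R := LinearMap.range M.mulVecLin
    let s : (Fin r → K) →ₗ[K] R :=
      (finBasis K R).equivFun.symm.toLinearMap ∘ₗ LinearMap.funLeft K K (Fin.castLE h)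
    have hs : Function.Surjective s := (finBasis K R).equivFun.symm.surjective.comp
      (LinearMap.funLeft_surjective_of_injective _ _ _ (Fin.castLE_injective h))
    obtain ⟨g, hg⟩ := Module.projective_lifting_property s M.mulVecLin.rangeRestrict hs
    refine ⟨LinearMap.toMatrix' (R.subtype ∘ₗ s), LinearMap.toMatrix' g, ?_⟩
    rw [← LinearMap.toMatrix'_comp, LinearMap.comp_assoc, hg, LinearMap.subtype_comp_codRestrict]
    exact LinearMap.toMatrix'_toLin' M
  · subst hXY
    simpa using (rank_mul_le_left X Y).trans (rank_le_card_width X)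

theorem map_funLeft_span_range_row {R m ι ι' : Type*} [Semiring R] (W : Matrix m ι R)
    (g : ι' → ι) :
    (Submodule.span R (Set.range W.row)).map (LinearMap.funLeft R R g) =
      Submodule.span R (Set.range (W.submatrix id g).row) := by
  rw [Submodule.map_span, ← Set.range_comp]
  rfl

theorem exists_span_range_row_eq {K ι : Type*} [DivisionRing K] [Finite ι] {k : ℕ}
    (𝒱 : Submodule K (ι → K)) (h : finrank K 𝒱 = k) :
    ∃ W : Matrix (Fin k) ι K, Submodule.span K (Set.range W.row) = 𝒱 := by
  let b := finBasisOfFinrankEq K 𝒱 h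
  refine ⟨Matrix.of fun i => b i, ?_⟩
  rw [show Set.range (Matrix.of fun i => (b i : ι → K)).row = 𝒱.subtype '' Set.range b by
      rw [← Set.range_comp]; rfl,
    ← Submodule.map_span, b.span_eq, Submodule.map_top, Submodule.range_subtype]

end Matrix

def tailCols (n k' : ℕ) : Fin (n - k') → Fin n := fun j => ⟨k' + j, by omega⟩

theorem tailCols_injective (n k' : ℕ) : Function.Injective (tailCols n k') :=
  fun a b hab => by simpa [tailCols, Fin.ext_iff] using hab

section stdSubspace

variable {F : Type*} [Field F] {n k' : ℕ}

theorem finrank_stdSubspace (h : k' ≤ n) : finrank F (stdSubspace F n k' h) = k' := by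
  rw [stdSubspace, finrank_span_eq_card, Fintype.card_fin]
  simpa [Function.comp_def] using
    (Pi.basisFun F (Fin n)).linearIndependent.comp _ (Fin.castLE_injective h)

theorem stdSubspace_le_ker_funLeft_tailCols (h : k' ≤ n) :
    stdSubspace F n k' h ≤ LinearMap.ker (LinearMap.funLeft F F (tailCols n k')) := by
  rw [stdSubspace, Submodule.span_le]
  rintro _ ⟨i, rfl⟩
  ext j
  simp only [LinearMap.funLeft_apply, Pi.zero_apply]
  rw [Pi.single_apply, if_neg]
  simp [tailCols, Fin.ext_iff]
  omega

theorem finrank_ker_funLeft_tailCols (h : k' ≤ n) :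
    finrank F (LinearMap.ker (LinearMap.funLeft F F (tailCols n k'))) = k' := by
  have := LinearMap.finrank_range_add_finrank_ker (LinearMap.funLeft F F (tailCols n k'))
  rw [LinearMap.range_eq_top.mpr (LinearMap.funLeft_surjective_of_injective _ _ _
    (tailCols_injective n k')), finrank_top, finrank_fin_fun, finrank_fin_fun] at this
  omega

theorem stdSubspace_eq_ker_funLeft_tailCols (h : k' ≤ n) :
    stdSubspace F n k' h = LinearMap.ker (LinearMap.funLeft F F (tailCols n k')) :=
  Submodule.eq_of_le_of_finrank_eq (stdSubspace_le_ker_funLeft_tailCols h)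
    (by rw [finrank_stdSubspace, finrank_ker_funLeft_tailCols h])

theorem finrank_stdSubspace_inf_add_rank_submatrix_tailCols {m : Type*} [Fintype m]
    (h : k' ≤ n) (W : Matrix m (Fin n) F) :
    finrank F ↥(stdSubspace F n k' h ⊓ Submodule.span F (Set.range W.row)) +
      (W.submatrix id (tailCols n k')).rank = finrank F (Submodule.span F (Set.range W.row)) := by
  rw [Matrix.rank_eq_finrank_span_row, ← Matrix.map_funLeft_span_range_row, inf_comm,
    stdSubspace_eq_ker_funLeft_tailCols h, Submodule.finrank_inf_ker_add_finrank_map]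

end stdSubspace

/-- Rational parametrization of the ball `B_{I,t}^k(U₀)`: for
`|k-k'| ≤ t` and `ω = min(0, k-k') + t` (i.e. `ω = t - (k'-k)` truncated),
a `k`-dimensional subspace `𝒱` of `F^n` satisfies `d_I(U₀, 𝒱) ≤ t` iff
`𝒱 = rs[V₁ | V₂]` for some `V₁ ∈ F^{k×k'}` and `V₂ = X·Y` with
`X ∈ F^{k×ω}`, `Y ∈ F^{ω×(n-k')}`, where `[V₁ | V₂]` has rank `k`. -/
theorem statement14 (F : Type*) [Field F] (n k k' t : ℕ)
    (hk'n : k' ≤ n) (ht2 : (k' : ℤ) - (k : ℤ) ≤ (t : ℤ))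
    (𝒱 : Submodule F (Fin n → F)) (h𝒱 : Module.finrank F 𝒱 = k) :
    (max (Module.finrank F ↥(stdSubspace F n k' hk'n) : ℤ)
          (Module.finrank F 𝒱)
        - Module.finrank F ↥(stdSubspace F n k' hk'n ⊓ 𝒱)
      ≤ (t : ℤ))
    ↔ ∃ (V₁ : Matrix (Fin k) (Fin k') F)
        (X : Matrix (Fin k) (Fin (t - (k' - k))) F)
        (Y : Matrix (Fin (t - (k' - k))) (Fin (n - k')) F)
        (W : Matrix (Fin k) (Fin n) F),
        (∀ (i : Fin k) (j : Fin n),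
          W i j = if h : (j : ℕ) < k' then V₁ i ⟨(j : ℕ), h⟩
            else (X * Y) i ⟨(j : ℕ) - k', by have := j.isLt; omega⟩)
        ∧ W.rank = k
        ∧ 𝒱 = Submodule.span F (Set.range fun i : Fin k => W i) := by
  rw [finrank_stdSubspace, h𝒱]
  constructor
  · intro hdist
    obtain ⟨W, hW⟩ := Matrix.exists_span_range_row_eq 𝒱 h𝒱
    have hdim := finrank_stdSubspace_inf_add_rank_submatrix_tailCols hk'n W
    rw [hW, h𝒱] at hdim
    obtain ⟨X, Y, hXY⟩ := ((W.submatrix id (tailCols n k')).rank_le_iff_exists_mul_eq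
      (t - (k' - k))).mp (by omega)
    refine ⟨W.submatrix id (Fin.castLE hk'n), X, Y, W, fun i j => ?_,
      by rw [Matrix.rank_eq_finrank_span_row, hW, h𝒱], hW.symm⟩
    split_ifs with hj
    · rfl
    · rw [hXY]
      simp only [Matrix.submatrix_apply, id, tailCols]
      exact congrArg (W i) (Fin.ext (Nat.add_sub_cancel' (not_lt.mp hj)).symm)
  · rintro ⟨V₁, X, Y, W, hblocks, -, h𝒱W⟩
    have hW : Submodule.span F (Set.range W.row) = 𝒱 := h𝒱W.symm
    have htail : X * Y = W.submatrix id (tailCols n k') := by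
      ext i j
      simp [hblocks, tailCols]
    have hdim := finrank_stdSubspace_inf_add_rank_submatrix_tailCols hk'n W
    rw [hW, h𝒱] at hdim
    have hrank := ((W.submatrix id (tailCols n k')).rank_le_iff_exists_mul_eq
      (t - (k' - k))).mpr ⟨X, Y, htail⟩
    omega
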